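/- Every root of the polynomial ψ_s(z) = z^s − 2z^{s−1} − 1 other than its unique root ρ_s ∈ (2,3) lies strictly inside the unit circle in the complex plane. -/

import Mathlib

/-!
Substituting `u = z⁻¹` turns `ψ_s` into `u ^ s + 2 * u - 1`, with the root `t = ρ⁻¹ < 1/2`.
If another root `u` had `‖u‖ ≤ 1`, then `(u ^ s - t ^ s) / (u - t) = -2`; but this quotient is
`∑ u ^ k * t ^ (s - 1 - k)`, of norm at most `∑ t ^ k = (1 - t ^ s) / (1 - t) = 2 * t / (1 - t) < 2`.
-/

open Finset

lemma inv_pow_eq_one_sub_two_mul_inv {K : Type*} [Field K] {a : K} (ha : a ≠ 0) {s : ℕ}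
    (hs : 0 < s) (h : a ^ s - 2 * a ^ (s - 1) - 1 = 0) : a⁻¹ ^ s = 1 - 2 * a⁻¹ := by
  obtain ⟨n, rfl⟩ : ∃ n, s = n + 1 := ⟨s - 1, by omega⟩
  rw [Nat.add_sub_cancel] at h
  rw [inv_pow, eq_comm, ← mul_eq_one_iff_eq_inv₀ (pow_ne_zero _ ha)]
  calc (1 - 2 * a⁻¹) * a ^ (n + 1) = a ^ (n + 1) - 2 * a ^ n * (a * a⁻¹) := by ring
    _ = 1 := by rw [mul_inv_cancel₀ ha]; linear_combination h

lemma norm_geom_sum₂_le {𝕜 : Type*} [NormedField 𝕜] {u : 𝕜} (hu : ‖u‖ ≤ 1) (v : 𝕜) (n : ℕ) :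
    ‖∑ k ∈ range n, u ^ k * v ^ (n - 1 - k)‖ ≤ ∑ k ∈ range n, ‖v‖ ^ k := calc
  _ ≤ ∑ k ∈ range n, ‖u‖ ^ k * ‖v‖ ^ (n - 1 - k) := by
    simpa only [norm_mul, norm_pow] using norm_sum_le (range n) fun k => u ^ k * v ^ (n - 1 - k)
  _ ≤ ∑ k ∈ range n, ‖v‖ ^ (n - 1 - k) := by
    gcongr
    exact mul_le_of_le_one_left (by positivity) (pow_le_one₀ (norm_nonneg u) hu)
  _ = ∑ k ∈ range n, ‖v‖ ^ k := sum_range_reflect (‖v‖ ^ ·) n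

lemma geom_sum_lt_two {t : ℝ} (ht : t < 1 / 2) {s : ℕ} (hts : t ^ s = 1 - 2 * t) :
    ∑ k ∈ range s, t ^ k < 2 := by
  rw [geom_sum_eq (by linarith), hts, div_lt_iff_of_neg (by linarith)]
  linarith

lemma eq_of_pow_add_two_mul_eq {𝕜 : Type*} [RCLike 𝕜] {u v : 𝕜} {s : ℕ} (hu : ‖u‖ ≤ 1)
    (hv : ∑ k ∈ range s, ‖v‖ ^ k < 2) (h : u ^ s + 2 * u = v ^ s + 2 * v) : u = v := by
  by_contra huv
  set q := ∑ k ∈ range s, u ^ k * v ^ (s - 1 - k)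
  have hq : q = -2 := by
    have : (q + 2) * (u - v) = 0 := by
      rw [add_mul, geom_sum₂_mul]
      linear_combination h
    linear_combination (mul_eq_zero.mp this).resolve_right (sub_ne_zero.mpr huv)
  have := (norm_geom_sum₂_le hu v s).trans_lt hv
  simp [q, hq] at this

/-- Every complex root of `ψ_s(z) = z^s - 2z^(s-1) - 1` other than its unique real root
`ρ_s ∈ (2,3)` lies strictly inside the unit circle. -/
theorem stmt8 (s : ℕ) (hs : 1 < s) (ρ : ℝ) (hρ : ρ ∈ Set.Ioo (2 : ℝ) 3)
    (hroot : ρ ^ s - 2 * ρ ^ (s - 1) - 1 = 0)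
    (w : ℂ) (hw : w ^ s - 2 * w ^ (s - 1) - 1 = 0) (hne : w ≠ (ρ : ℂ)) :
    ‖w‖ < 1 := by
  have hρ0 : 0 < ρ := by linarith [hρ.1]
  have hw0 : w ≠ 0 := by
    rintro rfl
    simp [zero_pow (by omega : s ≠ 0), zero_pow (by omega : s - 1 ≠ 0)] at hw
  have hρinv : ρ⁻¹ < 1 / 2 := by rw [one_div, inv_lt_inv₀ hρ0 two_pos]; exact hρ.1
  have hρinv_root := inv_pow_eq_one_sub_two_mul_inv hρ0.ne' (by omega) hroot
  by_contra! hw1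
  have : w⁻¹ = ((ρ⁻¹ : ℝ) : ℂ) := by
    refine eq_of_pow_add_two_mul_eq (s := s) (by simpa using inv_le_one_of_one_le₀ hw1) ?_ ?_
    · simpa [abs_of_pos hρ0] using geom_sum_lt_two hρinv hρinv_root
    · rw [inv_pow_eq_one_sub_two_mul_inv hw0 (by omega) hw, ← Complex.ofReal_pow, hρinv_root]
      push_cast
      ring
  exact hne (by simpa using this)
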